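/- arXiv:1507.07083 — 6 statements merged into one kernel-verified Lean document; each statement's English description precedes it below -/
import Mathlib

section
/- Let G be a simple connected graph on n ≥ 4 vertices with diameter d ≥ 3, remoteness ρ, and distance eigenvalues ∂_1 ≥ ∂_2 ≥ ... ≥ ∂_n. Then ρ + ∂_3 > 0. -/
/-!
Let `u₀u₁u₂u₃` be the first four vertices of a shortest path between two vertices at distance
`d ≥ 3`. Every vertex `w` has `d(u₀, w) + d(w, u₃) ≥ 3`, so `Tr(u₀) + Tr(u₃) ≥ 3n` and
`ρ ≥ 3n / (2(n - 1)) > 3/2`. On the other hand, the vectors supported on `{u₀, u₁, u₂, u₃}` that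
take the same value at `u₀` and `u₃` form a 3-dimensional space on which the quadratic form of
`D(G)` is that of `D(P₄)`, which there is at least `-5/4` times the squared norm. By the
Courant–Fischer min-max principle, `∂₃ ≥ -5/4`.
-/

set_option linter.unusedSectionVars false

open Finset

namespace DistPaper

variable {V : Type*} [Fintype V] [DecidableEq V]

/-- The distance matrix of a graph: the `(u,v)` entry is the graph distance. -/
noncomputable def distMatrix (G : SimpleGraph V) : Matrix V V ℝ :=
  fun u v => (G.dist u v : ℝ)

lemma isHermitian_distMatrix (G : SimpleGraph V) : (distMatrix G).IsHermitian := by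
  ext u v
  simp [distMatrix, Matrix.conjTranspose_apply, SimpleGraph.dist_comm]

/-- The `k`-th largest eigenvalue (1-indexed, so `k = 1` is the largest) of the
distance matrix of `G`; junk value `0` if `k - 1 ≥ |V|`. -/
noncomputable def distEig (G : SimpleGraph V) (k : ℕ) : ℝ :=
  if h : k - 1 < Fintype.card V then
    ((isHermitian_distMatrix G).eigenvalues ∘ (Fintype.equivFin V).symm)
      (Tuple.sort ((isHermitian_distMatrix G).eigenvalues ∘ (Fintype.equivFin V).symm)
        (Fin.rev ⟨k - 1, h⟩))
  else 0

/-- The transmission of a vertex: the sum of the distances to all other vertices. -/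
noncomputable def transmission (G : SimpleGraph V) (v : V) : ℕ :=
  ∑ u, G.dist v u

/-- The remoteness of a graph: the maximum over all vertices of the average
distance from that vertex to the others, `ρ = max_v Tr(v)/(n-1)`. -/
noncomputable def remoteness (G : SimpleGraph V) : ℝ :=
  ((univ.sup (transmission G) : ℕ) : ℝ) / ((Fintype.card V : ℝ) - 1)

/-- `G` is a complete multipartite graph: vertices can be classified so that two
vertices are adjacent iff they lie in different classes. -/
def IsCompleteMultipartite (G : SimpleGraph V) : Prop :=
  ∃ f : V → V, ∀ u v, G.Adj u v ↔ f u ≠ f v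

/-- The `k`-th largest eigenvalue (1-indexed) of the Laplacian matrix of `G`;
junk value `0` if `k - 1 ≥ |V|`. -/
noncomputable def lapEig (G : SimpleGraph V) (k : ℕ) : ℝ := by
  classical
  exact if h : k - 1 < Fintype.card V then
    (((SimpleGraph.posSemidef_lapMatrix ℝ G).1).eigenvalues ∘ (Fintype.equivFin V).symm)
      (Tuple.sort ((((SimpleGraph.posSemidef_lapMatrix ℝ G)).1).eigenvalues ∘ (Fintype.equivFin V).symm)
        (Fin.rev ⟨k - 1, h⟩))
  else 0

/-- The Wiener index: the sum of distances over unordered pairs of vertices. -/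
noncomputable def wienerIndex (G : SimpleGraph V) : ℝ :=
  (∑ u, ∑ v, (G.dist u v : ℝ)) / 2

end DistPaper

open Matrix

namespace SimpleGraph

variable {V : Type*} {G : SimpleGraph V}

lemma Walk.dist_getVert_getVert_add_le {u v : V} (p : G.Walk u v) (i k : ℕ) :
    G.dist (p.getVert i) (p.getVert (i + k)) ≤ k := by
  have hq := dist_le (((p.drop i).take k).copy rfl (p.drop_getVert i k))
  simp only [Walk.length_copy, Walk.take_length] at hq
  omega

lemma Walk.dist_getVert_getVert_of_length_eq_dist (hconn : G.Connected) {u v : V}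
    (p : G.Walk u v) (hp : p.length = G.dist u v) {i j : ℕ} (hij : i ≤ j)
    (hj : j ≤ p.length) : G.dist (p.getVert i) (p.getVert j) = j - i := by
  have hmid := p.dist_getVert_getVert_add_le i (j - i)
  have hfst := p.dist_getVert_getVert_add_le 0 i
  have hlst := p.dist_getVert_getVert_add_le j (p.length - j)
  rw [Nat.add_sub_cancel' hij] at hmid
  rw [zero_add, Walk.getVert_zero] at hfst
  rw [Nat.add_sub_cancel' hj, Walk.getVert_length] at hlst
  have := hconn.dist_triangle (u := u) (v := p.getVert i) (w := p.getVert j)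
  have := hconn.dist_triangle (u := u) (v := p.getVert j) (w := v)
  omega

end SimpleGraph

namespace Matrix

lemma sum_smul_single_dotProduct_mulVec {R ι n : Type*} [CommSemiring R] [Fintype ι] [Fintype n]
    [DecidableEq n] (A : Matrix n n R) (u : ι → n) (w : ι → R) :
    (∑ i, w i • Pi.single (u i) 1) ⬝ᵥ A *ᵥ ∑ i, w i • Pi.single (u i) 1 =
      w ⬝ᵥ A.submatrix u u *ᵥ w := by
  simp only [sum_dotProduct, smul_dotProduct, mulVec_sum, mulVec_smul, dotProduct_sum,
    dotProduct_smul, mulVec_single_one, single_dotProduct]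
  simp only [col_apply, smul_eq_mul, dotProduct, mulVec, submatrix_apply, mul_sum]
  rw [Finset.sum_comm]
  exact sum_congr rfl fun i _ => sum_congr rfl fun j _ => by ring

lemma sum_smul_single_dotProduct_self {R ι n : Type*} [CommSemiring R] [Fintype ι] [DecidableEq ι]
    [Fintype n] [DecidableEq n] {u : ι → n} (hu : Function.Injective u) (w : ι → R) :
    (∑ i, w i • Pi.single (u i) 1) ⬝ᵥ ∑ i, w i • Pi.single (u i) 1 = w ⬝ᵥ w := by
  simpa [submatrix_one _ hu] using sum_smul_single_dotProduct_mulVec 1 u w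

end Matrix

namespace Matrix.IsHermitian

variable {n : Type*} [Fintype n] [DecidableEq n] {A : Matrix n n ℝ} (hA : A.IsHermitian)

lemma dotProduct_mulVec_eq_sum_eigenvalues (x : n → ℝ) :
    x ⬝ᵥ A *ᵥ x =
      ∑ i, hA.eigenvalues i * (star (hA.eigenvectorUnitary : Matrix n n ℝ) *ᵥ x) i ^ 2 := by
  set U : Matrix n n ℝ := (hA.eigenvectorUnitary : Matrix n n ℝ)
  have hA' : A = U * diagonal hA.eigenvalues * star U := by
    conv_lhs => rw [hA.spectral_theorem, Unitary.conjStarAlgAut_apply]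
    rfl
  conv_lhs => rw [hA', ← mulVec_mulVec, ← mulVec_mulVec, dotProduct_mulVec, ← mulVec_transpose,
    star_eq_conjTranspose, conjTranspose_eq_transpose_of_trivial, dotProduct]
  simp only [mulVec_diagonal, star_eq_conjTranspose, conjTranspose_eq_transpose_of_trivial]
  exact sum_congr rfl fun i _ => by ring

lemma dotProduct_self_eq_sum_sq (x : n → ℝ) :
    x ⬝ᵥ x = ∑ i, (star (hA.eigenvectorUnitary : Matrix n n ℝ) *ᵥ x) i ^ 2 := by
  set U : Matrix n n ℝ := (hA.eigenvectorUnitary : Matrix n n ℝ)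
  have hU : U * star U = 1 := Unitary.mul_star_self_of_mem hA.eigenvectorUnitary.2
  calc x ⬝ᵥ x = (star U *ᵥ x) ⬝ᵥ (star U *ᵥ x) := by
        rw [dotProduct_mulVec, ← mulVec_transpose, star_eq_conjTranspose,
          conjTranspose_eq_transpose_of_trivial, transpose_transpose, mulVec_mulVec,
          ← conjTranspose_eq_transpose_of_trivial, ← star_eq_conjTranspose, hU, one_mulVec]
    _ = _ := by simp only [dotProduct, sq]

/-- The easy half of the Courant–Fischer principle: some nonzero `x ∈ W` is orthogonal to the
eigenvectors indexed by `S`, and its Rayleigh quotient is an average of the other eigenvalues. -/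
lemma exists_le_eigenvalues_of_le_dotProduct_mulVec (W : Submodule ℝ (n → ℝ)) (S : Finset n)
    (hS : #S < Module.finrank ℝ W) {c : ℝ} (hW : ∀ x ∈ W, c * (x ⬝ᵥ x) ≤ x ⬝ᵥ A *ᵥ x) :
    ∃ i ∉ S, c ≤ hA.eigenvalues i := by
  set U : Matrix n n ℝ := (hA.eigenvectorUnitary : Matrix n n ℝ)
  let f : W →ₗ[ℝ] (S → ℝ) :=
    (LinearMap.pi fun i : S => LinearMap.proj (R := ℝ) (φ := fun _ : n => ℝ) i.1 ∘ₗ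
      (star U).mulVecLin) ∘ₗ W.subtype
  obtain ⟨⟨x, hxW⟩, hx, hx0⟩ := (Submodule.ne_bot_iff _).mp <| f.ker_ne_bot_of_finrank_lt <| by
    rwa [Module.finrank_fintype_fun_eq_card, Fintype.card_coe]
  have hyS : ∀ i ∈ S, (star U *ᵥ x) i = 0 := fun i hi => congrFun hx ⟨i, hi⟩
  have hy0 : star U *ᵥ x ≠ 0 := by
    intro hy
    have hU : U * star U = 1 := Unitary.mul_star_self_of_mem hA.eigenvectorUnitary.2
    apply hx0
    ext1
    simpa [mulVec_mulVec, hU] using congrArg (U *ᵥ ·) hy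
  by_contra! hlt
  obtain ⟨j, hj⟩ := Function.ne_iff.mp hy0
  have hjS : j ∉ S := fun h => hj (hyS j h)
  refine (hW x hxW).not_gt ?_
  rw [hA.dotProduct_mulVec_eq_sum_eigenvalues, hA.dotProduct_self_eq_sum_sq, mul_sum]
  refine sum_lt_sum (fun i _ => ?_) ⟨j, mem_univ j, ?_⟩
  · by_cases hi : i ∈ S
    · rw [hyS i hi]; simp
    · exact mul_le_mul_of_nonneg_right (hlt i hi).le (sq_nonneg _)
  · exact mul_lt_mul_of_pos_right (hlt j hjS) (sq_pos_of_ne_zero hj)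

end Matrix.IsHermitian

namespace DistPaper

lemma submatrix_distMatrix_eq {V : Type*} {G : SimpleGraph V} {u : Fin 4 → V}
    (hu : ∀ i j : Fin 4, i ≤ j → G.dist (u i) (u j) = j - i) :
    (distMatrix G).submatrix u u = !![0, 1, 2, 3; 1, 0, 1, 2; 2, 1, 0, 1; 3, 2, 1, 0] := by
  ext i j
  rcases le_total i j with hij | hij
  · rw [submatrix_apply, distMatrix, hu i j hij]
    fin_cases i <;> fin_cases j <;> simp_all
  · rw [submatrix_apply, distMatrix, SimpleGraph.dist_comm, hu j i hij]
    fin_cases i <;> fin_cases j <;> simp_all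

variable {V : Type*} [Fintype V]

lemma card_mul_dist_le_transmission_add {G : SimpleGraph V} (hconn : G.Connected) (u w : V) :
    Fintype.card V * G.dist u w ≤ transmission G u + transmission G w := by
  rw [transmission, transmission, ← sum_add_distrib, ← smul_eq_mul, ← card_univ, ← sum_const]
  refine sum_le_sum fun v _ => ?_
  rw [G.dist_comm (u := w)]
  exact hconn.dist_triangle

lemma half_dist_lt_remoteness {G : SimpleGraph V} (hconn : G.Connected) {u w : V} (huw : u ≠ w) :
    (G.dist u w : ℝ) / 2 < remoteness G := by
  have hdist : (0 : ℝ) < G.dist u w := by exact_mod_cast hconn.pos_dist_of_ne huw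
  have hcard : (1 : ℝ) < Fintype.card V := by
    exact_mod_cast Fintype.one_lt_card_iff.mpr ⟨u, w, huw⟩
  have hsum : Fintype.card V * G.dist u w ≤ 2 * univ.sup (transmission G) := by
    have := card_mul_dist_le_transmission_add hconn u w
    have := le_sup (f := transmission G) (mem_univ u)
    have := le_sup (f := transmission G) (mem_univ w)
    omega
  have hsum' : (Fintype.card V : ℝ) * G.dist u w ≤ 2 * univ.sup (transmission G) := by
    exact_mod_cast hsum
  rw [remoteness, lt_div_iff₀ (by linarith)]
  nlinarith

variable [DecidableEq V]

lemma card_filter_distEig_lt_le (G : SimpleGraph V) {k : ℕ} (hk : k < Fintype.card V) :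
    #{v | distEig G (k + 1) < (isHermitian_distMatrix G).eigenvalues v} ≤ k := by
  set e := Fintype.equivFin V
  set g := (isHermitian_distMatrix G).eigenvalues ∘ e.symm
  set σ := Tuple.sort g
  set j : Fin (Fintype.card V) := Fin.rev ⟨k, hk⟩
  have hj : distEig G (k + 1) = g (σ j) := by simp [distEig, hk, g, σ, j, e]
  calc #{v | distEig G (k + 1) < (isHermitian_distMatrix G).eigenvalues v}
      ≤ #(Ioi j) := by
        refine card_le_card_of_injOn (fun v => σ⁻¹ (e v)) (fun v hv => ?_) ?_
        · have hv : g (σ j) < g (σ (σ⁻¹ (e v))) := by simpa [hj, g] using hv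
          exact mem_Ioi.mpr (lt_of_not_ge fun h => hv.not_ge (Tuple.monotone_sort g h))
        · exact fun v _ w _ h => e.injective (σ⁻¹.injective h)
    _ = k := by simp only [Fin.card_Ioi, j, Fin.val_rev]; omega

lemma le_distEig_of_le_dotProduct_mulVec (G : SimpleGraph V) {k : ℕ} (hk : k < Fintype.card V)
    (W : Submodule ℝ (V → ℝ)) (hW : k < Module.finrank ℝ W) {c : ℝ}
    (hc : ∀ x ∈ W, c * (x ⬝ᵥ x) ≤ x ⬝ᵥ distMatrix G *ᵥ x) : c ≤ distEig G (k + 1) := by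
  obtain ⟨v, hv, hcv⟩ := (isHermitian_distMatrix G).exists_le_eigenvalues_of_le_dotProduct_mulVec W
    _ ((card_filter_distEig_lt_le G hk).trans_lt hW) hc
  simp only [mem_filter_univ, not_lt] at hv
  exact hcv.trans hv

lemma neg_five_div_four_le_distEig_three {G : SimpleGraph V} {u : Fin 4 → V}
    (hu : ∀ i j : Fin 4, i ≤ j → G.dist (u i) (u j) = j - i) : -(5 / 4 : ℝ) ≤ distEig G 3 := by
  have hu_inj : Function.Injective u := by
    intro i j h
    rcases le_total i j with hij | hij
    · have := hu i j hij; rw [h, SimpleGraph.dist_self] at this; omega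
    · have := hu j i hij; rw [h, SimpleGraph.dist_self] at this; omega
  have hcard : 2 < Fintype.card V := by
    have := Fintype.card_le_of_injective u hu_inj
    rw [Fintype.card_fin] at this
    omega
  -- `L t` takes the values `t 0, t 1, t 2, t 0` at `u 0, u 1, u 2, u 3` and vanishes elsewhere.
  let L : (Fin 3 → ℝ) →ₗ[ℝ] (V → ℝ) :=
    Fintype.linearCombination ℝ (Pi.basisFun ℝ V ∘ u) ∘ₗ
      LinearMap.funLeft ℝ ℝ (![0, 1, 2, 0] : Fin 4 → Fin 3)
  have hL : Function.Injective L :=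
    ((Pi.basisFun ℝ V).linearIndependent.comp u hu_inj).fintypeLinearCombination_injective.comp
      (LinearMap.funLeft_injective_of_surjective _ _ (![0, 1, 2, 0] : Fin 4 → Fin 3) (by decide))
  refine le_distEig_of_le_dotProduct_mulVec G hcard (LinearMap.range L)
    (by rw [LinearMap.finrank_range_of_inj hL]; simp) ?_
  rintro _ ⟨t, rfl⟩
  simp only [L, LinearMap.comp_apply, Fintype.linearCombination_apply, Function.comp_apply,
    Pi.basisFun_apply]
  rw [sum_smul_single_dotProduct_mulVec, sum_smul_single_dotProduct_self hu_inj,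
    submatrix_distMatrix_eq hu]
  simp only [dotProduct, mulVec, Fin.sum_univ_four, LinearMap.funLeft_apply,
    of_apply, cons_val', cons_val_zero, cons_val_one, Matrix.cons_val, cons_val_fin_one, zero_mul,
    one_mul, neg_mul, zero_add, add_zero]
  -- with `a = t 0`, `s = t 1 + t 2`, the difference of the two sides is
  -- `9/8 (s + 8a/3)² + a²/2 + (t 1 - t 2)²/8`
  nlinarith [sq_nonneg (3 * (t 1 + t 2) + 8 * t 0), sq_nonneg (t 1 - t 2), sq_nonneg (t 0)]

theorem remoteness_add_distEig_three_pos_general (n : ℕ) (G : SimpleGraph (Fin n))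
    (hconn : G.Connected) (hd : 3 ≤ G.diam) :
    0 < remoteness G + distEig G 3 := by
  have := hconn.nonempty
  obtain ⟨u, v, huv⟩ := G.exists_dist_eq_diam
  obtain ⟨p, hp⟩ := hconn.exists_walk_length_eq_dist u v
  have hgeod (i j : Fin 4) (hij : i ≤ j) : G.dist (p.getVert i) (p.getVert j) = j - i :=
    p.dist_getVert_getVert_of_length_eq_dist hconn hp hij (by omega)
  have hρ : 3 / 2 < remoteness G := by
    have h03 : G.dist (p.getVert 0) (p.getVert 3) = 3 := hgeod 0 3 (by decide)
    have hne : p.getVert 0 ≠ p.getVert 3 := fun h => by simp [h] at h03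
    have := half_dist_lt_remoteness hconn hne
    rwa [h03, Nat.cast_ofNat] at this
  linarith [neg_five_div_four_le_distEig_three hgeod]

/-- For a simple connected graph on `n ≥ 4` vertices with diameter
`d ≥ 3`, remoteness `ρ` and distance eigenvalues `∂_1 ≥ ⋯ ≥ ∂_n`, we have `ρ + ∂_3 > 0`. -/
theorem remoteness_add_distEig_three_pos (n : ℕ) (hn : 4 ≤ n) (G : SimpleGraph (Fin n))
    (hconn : G.Connected) (hd : 3 ≤ G.diam) :
    0 < remoteness G + distEig G 3 :=
  remoteness_add_distEig_three_pos_general n G hconn hd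

end DistPaper
end

section
/- Let T be a tree on n ≥ 2 vertices. Let ∂_1 ≥ ∂_2 ≥ ... ≥ ∂_n be the eigenvalues of the distance matrix D(T), and let λ_1 ≥ λ_2 ≥ ... ≥ λ_{n-1} > λ_n = 0 be the eigenvalues of the Laplacian matrix L(T). Then 0 > -2/λ_1 ≥ ∂_2, and for each i with 2 ≤ i ≤ n-1, ∂_i ≥ -2/λ_i ≥ ∂_{i+1} (in particular ∂_{n-1} ≥ -2/λ_{n-1} ≥ ∂_n). -/
set_option linter.unusedSectionVars false

open Finset

/-!
For a tree, `D L = 𝟙 (2 - deg)ᵀ - 2 I`, because among the neighbours of a vertex `v ≠ x`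
exactly one is closer to `x` than `v`. As `L 𝟙 = 0`, this gives `L D L = -2 L`. Hence on the
orthonormal eigenvectors `u₁, …, u_{n-1}` of `L` with eigenvalues `λ₁ ≥ ⋯ ≥ λ_{n-1} > 0` the
form `⟪x, D y⟫` is diagonal with entries `-2/λ₁ ≥ ⋯ ≥ -2/λ_{n-1}`, since
`λᵢ λⱼ ⟪uᵢ, D uⱼ⟫ = ⟪uᵢ, L D L uⱼ⟫`. These are the eigenvalues of the compression of `D` to
`𝟙ᗮ`, and the claim is Cauchy interlacing for that compression. Interlacing is the usual
dimension count: a subspace on which the Rayleigh quotient of `D` is `≥ a` meets one on which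
it is `≤ b` as soon as their dimensions add up to more than `n`, and then `a ≤ b`.
-/

theorem Antitone.comp_perm_apply_sort_rev {α : Type*} [LinearOrder α] {n : ℕ} {f : Fin n → α}
    (hf : Antitone f) (σ : Equiv.Perm (Fin n)) (k : Fin n) :
    (f ∘ σ) (Tuple.sort (f ∘ σ) k.rev) = f k := by
  have hrev : f ∘ Fin.revPerm = f ∘ Tuple.sort f :=
    Tuple.comp_sort_eq_comp_iff_monotone.mpr fun a b hab => hf (Fin.rev_le_rev.mpr hab)
  calc (f ∘ σ) (Tuple.sort (f ∘ σ) k.rev) = (f ∘ Tuple.sort f) k.rev :=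
        congrFun (Tuple.comp_perm_comp_sort_eq_comp_sort (σ := σ)) k.rev
    _ = f k := by rw [← hrev]; simp

namespace LinearMap

open Module

variable {E ι κ : Type*} [NormedAddCommGroup E] [InnerProductSpace ℝ E]
  [DecidableEq ι] [DecidableEq κ]

def IsInnerDiagonal (T : E →ₗ[ℝ] E) (v : ι → E) (w : ι → ℝ) : Prop :=
  ∀ i j, inner ℝ (v i) (T (v j)) = if i = j then w i else 0

namespace IsInnerDiagonal

variable {T : E →ₗ[ℝ] E} {v : ι → E} {w : ι → ℝ}

lemma comp (h : IsInnerDiagonal T v w) {f : κ → ι} (hf : Function.Injective f) :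
    IsInnerDiagonal T (v ∘ f) (w ∘ f) := fun i j => by
  simpa [hf.eq_iff] using h (f i) (f j)

lemma of_orthonormal (hv : Orthonormal ℝ v) : IsInnerDiagonal LinearMap.id v 1 := fun i j => by
  simpa using orthonormal_iff_ite.mp hv i j

lemma inner_sum_smul [Fintype ι] (h : IsInnerDiagonal T v w) (c : ι → ℝ) :
    inner ℝ (∑ i, c i • v i) (T (∑ i, c i • v i)) = ∑ i, c i ^ 2 * w i := by
  simp only [map_sum, map_smul, sum_inner, inner_sum, real_inner_smul_left,
    real_inner_smul_right, h _ _, mul_ite, mul_zero, sum_ite_eq', mem_univ, if_true]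
  exact sum_congr rfl fun i _ => by ring

variable [Fintype ι] (hv : Orthonormal ℝ v)
include hv

lemma norm_sum_smul_sq (c : ι → ℝ) : ‖∑ i, c i • v i‖ ^ 2 = ∑ i, c i ^ 2 := by
  simpa [real_inner_self_eq_norm_sq] using (of_orthonormal hv).inner_sum_smul c

variable (h : IsInnerDiagonal T v w)
include h

lemma mul_norm_sq_le_inner_of_mem_span {a : ℝ} (ha : ∀ i, a ≤ w i) {x : E}
    (hx : x ∈ Submodule.span ℝ (Set.range v)) : a * ‖x‖ ^ 2 ≤ inner ℝ x (T x) := by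
  obtain ⟨c, rfl⟩ := (Submodule.mem_span_range_iff_exists_fun ℝ).mp hx
  rw [norm_sum_smul_sq hv, h.inner_sum_smul, mul_sum]
  exact sum_le_sum fun i _ => by nlinarith [ha i, sq_nonneg (c i)]

lemma inner_le_mul_norm_sq_of_mem_span {b : ℝ} (hb : ∀ i, w i ≤ b) {x : E}
    (hx : x ∈ Submodule.span ℝ (Set.range v)) : inner ℝ x (T x) ≤ b * ‖x‖ ^ 2 := by
  obtain ⟨c, rfl⟩ := (Submodule.mem_span_range_iff_exists_fun ℝ).mp hx
  rw [norm_sum_smul_sq hv, h.inner_sum_smul, mul_sum]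
  exact sum_le_sum fun i _ => by nlinarith [hb i, sq_nonneg (c i)]

end IsInnerDiagonal

lemma le_of_finrank_lt_add [FiniteDimensional ℝ E] {T : E →ₗ[ℝ] E} {S₁ S₂ : Submodule ℝ E}
    (hdim : finrank ℝ E < finrank ℝ S₁ + finrank ℝ S₂) {a b : ℝ}
    (h₁ : ∀ x ∈ S₁, a * ‖x‖ ^ 2 ≤ inner ℝ x (T x))
    (h₂ : ∀ x ∈ S₂, inner ℝ x (T x) ≤ b * ‖x‖ ^ 2) : a ≤ b := by
  have hinf : 0 < finrank ℝ ↥(S₁ ⊓ S₂) := by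
    have := Submodule.finrank_sup_add_finrank_inf_eq S₁ S₂
    have := Submodule.finrank_le (S₁ ⊔ S₂)
    omega
  obtain ⟨x, hx, hx0⟩ := Submodule.exists_mem_ne_zero_of_ne_bot
    (Submodule.one_le_finrank_iff.mp hinf)
  have hpos : 0 < ‖x‖ ^ 2 := by positivity
  exact le_of_mul_le_mul_right ((h₁ x hx.1).trans (h₂ x hx.2)) hpos

lemma le_of_isInnerDiagonal_of_finrank_lt [FiniteDimensional ℝ E] [Fintype ι] [Fintype κ]
    {T : E →ₗ[ℝ] E} {u : ι → E} {μ : ι → ℝ} {v : κ → E} {ν : κ → ℝ}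
    (hu : Orthonormal ℝ u) (huT : IsInnerDiagonal T u μ)
    (hv : Orthonormal ℝ v) (hvT : IsInnerDiagonal T v ν)
    (hcard : finrank ℝ E < Fintype.card ι + Fintype.card κ)
    {a b : ℝ} (ha : ∀ i, a ≤ μ i) (hb : ∀ j, ν j ≤ b) : a ≤ b :=
  le_of_finrank_lt_add
    (by rwa [finrank_span_eq_card hu.linearIndependent, finrank_span_eq_card hv.linearIndependent])
    (fun _ => huT.mul_norm_sq_le_inner_of_mem_span hu ha)
    (fun _ => hvT.inner_le_mul_norm_sq_of_mem_span hv hb)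

namespace IsSymmetric

variable [FiniteDimensional ℝ E] {T : E →ₗ[ℝ] E} (hT : T.IsSymmetric) {n : ℕ}
  (hn : finrank ℝ E = n)

lemma isInnerDiagonal_eigenvectorBasis :
    IsInnerDiagonal T (hT.eigenvectorBasis hn) (hT.eigenvalues hn) := fun i j => by
  rw [hT.apply_eigenvectorBasis, real_inner_smul_right,
    orthonormal_iff_ite.mp (hT.eigenvectorBasis hn).orthonormal]
  split_ifs with h <;> simp [h]

lemma isInnerDiagonal_eigenvectorBasis_of_comp_comp_eq_smul {S : E →ₗ[ℝ] E} {c : ℝ}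
    (hS : T ∘ₗ S ∘ₗ T = c • T) {f : ι → Fin n} (hf : Function.Injective f)
    (hf₀ : ∀ i, hT.eigenvalues hn (f i) ≠ 0) :
    IsInnerDiagonal S (hT.eigenvectorBasis hn ∘ f) (fun i => c / hT.eigenvalues hn (f i)) := by
  intro i j
  set b := hT.eigenvectorBasis hn
  set ev := hT.eigenvalues hn
  have key : ev (f i) * ev (f j) * inner ℝ (b (f i)) (S (b (f j)))
      = c * if i = j then ev (f i) else 0 := by
    calc _ = inner ℝ (T (b (f i))) (S (T (b (f j)))) := by
          simp only [b, ev, apply_eigenvectorBasis, Real.ringHom_apply, map_smul,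
            real_inner_smul_left, real_inner_smul_right]
          ring
      _ = inner ℝ (b (f i)) ((T ∘ₗ S ∘ₗ T) (b (f j))) := hT _ _
      _ = c * if i = j then ev (f i) else 0 := by
          rw [hS, smul_apply, real_inner_smul_right]
          exact congrArg (c * ·) ((hT.isInnerDiagonal_eigenvectorBasis hn).comp hf i j)
  simp only [Function.comp_apply]
  split_ifs at key ⊢ with h
  · subst h
    field_simp [hf₀ i] at key ⊢
    linarith
  · simpa [hf₀ i, hf₀ j] using key

/- Cauchy interlacing for the compression of `T` to the span of `u`, whose eigenvalues are `μ`. -/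

variable {m : ℕ} {u : Fin m → E} {μ : Fin m → ℝ} (hu : Orthonormal ℝ u)
  (huT : IsInnerDiagonal T u μ) (hμ : Antitone μ)
include hu huT hμ

theorem le_eigenvalues_of_isInnerDiagonal {k : Fin m} {j : Fin n} (hjk : (j : ℕ) ≤ k) :
    μ k ≤ hT.eigenvalues hn j := by
  refine le_of_isInnerDiagonal_of_finrank_lt (ι := Iic k) (κ := Ici j)
    (hu.comp _ Subtype.val_injective) (huT.comp Subtype.val_injective)
    ((hT.eigenvectorBasis hn).orthonormal.comp _ Subtype.val_injective)
    ((hT.isInnerDiagonal_eigenvectorBasis hn).comp Subtype.val_injective) ?_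
    (fun i => hμ (mem_Iic.mp i.2)) (fun i => hT.eigenvalues_antitone hn (mem_Ici.mp i.2))
  simp only [hn, Fintype.card_coe, Fin.card_Iic, Fin.card_Ici]
  omega

theorem eigenvalues_le_of_isInnerDiagonal {k : Fin m} {j : Fin n} (hjk : n + k ≤ m + j) :
    hT.eigenvalues hn j ≤ μ k := by
  refine le_of_isInnerDiagonal_of_finrank_lt (ι := Iic j) (κ := Ici k)
    ((hT.eigenvectorBasis hn).orthonormal.comp _ Subtype.val_injective)
    ((hT.isInnerDiagonal_eigenvectorBasis hn).comp Subtype.val_injective)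
    (hu.comp _ Subtype.val_injective) (huT.comp Subtype.val_injective) ?_
    (fun i => hT.eigenvalues_antitone hn (mem_Iic.mp i.2)) (fun i => hμ (mem_Ici.mp i.2))
  simp only [hn, Fintype.card_coe, Fin.card_Iic, Fin.card_Ici]
  omega

end IsSymmetric

end LinearMap

namespace SimpleGraph

open Matrix Module

variable {V : Type*} {G : SimpleGraph V}

lemma IsTree.eq_penultimate_of_dist_add_one (hG : G.IsTree) {x v y : V} {q : G.Walk x v}
    (hq : q.IsPath) (hadj : G.Adj y v) (hd : G.dist x y + 1 = G.dist x v) :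
    y = q.penultimate := by
  obtain ⟨r, -, hr⟩ := hG.connected.exists_path_of_dist x y
  have hrv : (r.concat hadj).IsPath :=
    Walk.isPath_of_length_eq_dist _ (by rw [Walk.length_concat, hr, hd])
  rw [(hG.existsUnique_path x v).unique hq hrv, Walk.penultimate_concat]

lemma Connected.dist_penultimate_add_one (hG : G.Connected) {x v : V} {q : G.Walk x v}
    (hq : q.length = G.dist x v) (hnil : ¬q.Nil) :
    G.dist x q.penultimate + 1 = G.dist x v := by
  have h₁ : G.dist x q.penultimate + 1 ≤ G.dist x v := by
    have := dist_le q.dropLast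
    have := Walk.length_dropLast_add_one hnil
    omega
  have h₂ := hG.dist_triangle (u := x) (v := q.penultimate) (w := v)
  rw [dist_eq_one_iff_adj.mpr (Walk.adj_penultimate hnil)] at h₂
  omega

lemma IsTree.sum_dist_neighborFinset_add_two [Fintype V] [DecidableRel G.Adj] (hG : G.IsTree)
    {x v : V} (hxv : x ≠ v) :
    ∑ y ∈ G.neighborFinset v, G.dist x y + 2 = G.degree v * (G.dist x v + 1) := by
  classical
  obtain ⟨q, hq, hql⟩ := hG.connected.exists_path_of_dist x v
  have hnil : ¬q.Nil := Walk.not_nil_of_ne hxv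
  have hp : q.penultimate ∈ G.neighborFinset v :=
    (mem_neighborFinset _ _ _).mpr (Walk.adj_penultimate hnil).symm
  have hfar : ∀ y ∈ (G.neighborFinset v).erase q.penultimate, G.dist x y = G.dist x v + 1 := by
    intro y hy
    obtain ⟨hyp, hadj⟩ := mem_erase.mp hy
    rw [mem_neighborFinset] at hadj
    refine (hG.dist_eq_dist_add_one_of_adj x hadj).resolve_left fun hd => hyp ?_
    exact hG.eq_penultimate_of_dist_add_one hq hadj.symm hd.symm
  have hnear := hG.connected.dist_penultimate_add_one hql hnil
  obtain ⟨d, hd⟩ : ∃ d, G.degree v = d + 1 :=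
    Nat.exists_eq_add_one.mpr (card_neighborFinset_eq_degree G v ▸ card_pos.mpr ⟨_, hp⟩)
  rw [← add_sum_erase _ _ hp, sum_congr rfl hfar, sum_const, card_erase_of_mem hp,
    card_neighborFinset_eq_degree, smul_eq_mul, hd, Nat.add_sub_cancel, ← hnear]
  ring

variable [Fintype V] [DecidableEq V] [DecidableRel G.Adj]

lemma Connected.finrank_ker_toEuclideanLin_lapMatrix (hG : G.Connected) :
    finrank ℝ (LinearMap.ker (toEuclideanLin (G.lapMatrix ℝ))) = 1 := by
  have hker : LinearMap.ker (toEuclideanLin (G.lapMatrix ℝ))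
      = (LinearMap.ker (toLin' (G.lapMatrix ℝ))).comap
        (WithLp.linearEquiv 2 ℝ (V → ℝ) : EuclideanSpace ℝ V →ₗ[ℝ] V → ℝ) := by
    ext x; simp [toLpLin_apply]
  have := hG.preconnected.subsingleton_connectedComponent
  have hcc : Fintype.card G.ConnectedComponent = 1 := Fintype.card_eq_one_iff.mpr
    ⟨G.connectedComponentMk hG.nonempty.some, fun _ => Subsingleton.elim _ _⟩
  rw [hker, Submodule.comap_equiv_eq_map_symm, LinearEquiv.finrank_map_eq,
    ← card_connectedComponent_eq_finrank_ker_toLin'_lapMatrix, hcc]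

lemma Connected.eigenvalues₀_lapMatrix_pos (hG : G.Connected) {k : Fin (Fintype.card V)}
    (hk : (k : ℕ) + 2 ≤ Fintype.card V) : 0 < (G.isHermitian_lapMatrix ℝ).eigenvalues₀ k := by
  set hL := isSymmetric_toEuclideanLin_iff.mpr (G.isHermitian_lapMatrix ℝ)
  set ev := hL.eigenvalues finrank_euclideanSpace
  have hnonneg : ∀ i, 0 ≤ ev i :=
    (isPositive_toEuclideanLin_iff.mpr (G.posSemidef_lapMatrix ℝ)).nonneg_eigenvalues _
  have hzeros : #{i | ev i = 0} = 1 := by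
    have h := hL.card_filter_eigenvalues_eq finrank_euclideanSpace 0
    rw [Module.End.eigenspace_zero, hG.finrank_ker_toEuclideanLin_lapMatrix] at h
    simpa using h
  refine (hnonneg k).lt_of_ne' fun hk0 => ?_
  let k' : Fin (Fintype.card V) := ⟨k + 1, by omega⟩
  have hk' : ev k' = 0 := le_antisymm (hk0 ▸ hL.eigenvalues_antitone _ k.val.le_succ) (hnonneg k')
  have := card_le_card (s := {k, k'}) (t := {i | ev i = 0})
    (by simp [insert_subset_iff, hk0, hk'])
  rw [card_pair (Fin.ne_of_val_ne (by simp [k'])), hzeros] at this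
  omega

end SimpleGraph

namespace DistPaper

open Matrix SimpleGraph

variable {V : Type*} [Fintype V] [DecidableEq V]

lemma distEig_succ (G : SimpleGraph V) {k : ℕ} (hk : k < Fintype.card V) :
    distEig G (k + 1) = (isHermitian_distMatrix G).eigenvalues₀ ⟨k, hk⟩ := by
  rw [distEig, dif_pos (by simpa using hk)]
  exact (isHermitian_distMatrix G).eigenvalues₀_antitone.comp_perm_apply_sort_rev
    ((Fintype.equivFin V).symm.trans (Fintype.equivOfCardEq (Fintype.card_fin _)).symm) _

lemma lapEig_succ (G : SimpleGraph V) [DecidableRel G.Adj] {k : ℕ} (hk : k < Fintype.card V) :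
    lapEig G (k + 1) = (G.isHermitian_lapMatrix ℝ).eigenvalues₀ ⟨k, hk⟩ := by
  -- `lapEig` uses the classical decidability instance
  obtain rfl : ‹DecidableRel G.Adj› = fun a b => Classical.propDecidable (G.Adj a b) :=
    Subsingleton.elim _ _
  classical
  rw [lapEig, dif_pos (by simpa using hk)]
  exact (G.isHermitian_lapMatrix ℝ).eigenvalues₀_antitone.comp_perm_apply_sort_rev
    ((Fintype.equivFin V).symm.trans (Fintype.equivOfCardEq (Fintype.card_fin _)).symm) _

variable {G : SimpleGraph V} [DecidableRel G.Adj]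

lemma distMatrix_mul_lapMatrix_apply (hG : G.IsTree) (x v : V) :
    (distMatrix G * G.lapMatrix ℝ) x v = 2 - G.degree v - if x = v then 2 else 0 := by
  have hsymm : (distMatrix G * G.lapMatrix ℝ) x v
      = (G.lapMatrix ℝ *ᵥ fun y => (G.dist x y : ℝ)) v := by
    simp only [mul_apply, mulVec, dotProduct, distMatrix, (G.isSymm_lapMatrix (R := ℝ)).apply,
      mul_comm]
  rw [hsymm, lapMatrix_mulVec_apply]
  split_ifs with hxv
  · subst hxv
    have : ∀ y ∈ G.neighborFinset x, (G.dist x y : ℝ) = 1 := fun y hy => by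
      rw [dist_eq_one_iff_adj.mpr ((mem_neighborFinset _ _ _).mp hy), Nat.cast_one]
    rw [sum_congr rfl this, sum_const, card_neighborFinset_eq_degree, dist_self]
    simp
  · have := congrArg (Nat.cast (R := ℝ)) (hG.sum_dist_neighborFinset_add_two hxv)
    push_cast at this
    linarith

lemma lapMatrix_mul_distMatrix_mul_lapMatrix (hG : G.IsTree) :
    G.lapMatrix ℝ * distMatrix G * G.lapMatrix ℝ = (-2 : ℝ) • G.lapMatrix ℝ := by
  have hrow : ∀ u, ∑ x, G.lapMatrix ℝ u x = 0 := fun u => by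
    simpa [mulVec, dotProduct] using congrFun (G.lapMatrix_mulVec_const_eq_zero (R := ℝ)) u
  ext u v
  simp only [Matrix.mul_assoc, mul_apply (M := G.lapMatrix ℝ), distMatrix_mul_lapMatrix_apply hG,
    mul_sub, sum_sub_distrib, ← sum_mul, hrow, mul_ite, mul_zero, sum_ite_eq', mem_univ, if_true,
    Matrix.smul_apply, smul_eq_mul]
  ring

theorem eigenvalues₀_distMatrix_interlace (hG : G.IsTree) {k : ℕ}
    (hk : k + 2 ≤ Fintype.card V) :
    -2 / (G.isHermitian_lapMatrix ℝ).eigenvalues₀ ⟨k, by omega⟩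
        ≤ (isHermitian_distMatrix G).eigenvalues₀ ⟨k, by omega⟩ ∧
      (isHermitian_distMatrix G).eigenvalues₀ ⟨k + 1, by omega⟩
        ≤ -2 / (G.isHermitian_lapMatrix ℝ).eigenvalues₀ ⟨k, by omega⟩ := by
  set n := Fintype.card V
  set hL := isSymmetric_toEuclideanLin_iff.mpr (G.isHermitian_lapMatrix ℝ)
  set hD := isSymmetric_toEuclideanLin_iff.mpr (isHermitian_distMatrix G)
  set f : Fin (n - 1) → Fin n := Fin.castLE (n.sub_le 1)
  have hpos (i : Fin (n - 1)) : 0 < hL.eigenvalues finrank_euclideanSpace (f i) :=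
    hG.connected.eigenvalues₀_lapMatrix_pos (by dsimp only [f, Fin.val_castLE]; omega)
  have hLDL : toEuclideanLin (G.lapMatrix ℝ) ∘ₗ toEuclideanLin (distMatrix G) ∘ₗ
      toEuclideanLin (G.lapMatrix ℝ) = (-2 : ℝ) • toEuclideanLin (G.lapMatrix ℝ) := by
    rw [← toLpLin_mul_same, ← toLpLin_mul_same, ← Matrix.mul_assoc,
      lapMatrix_mul_distMatrix_mul_lapMatrix hG, map_smul]
  have hdiag := hL.isInnerDiagonal_eigenvectorBasis_of_comp_comp_eq_smul finrank_euclideanSpace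
    hLDL (Fin.castLE_injective _) fun i => (hpos i).ne'
  have hanti : Antitone fun i => -2 / hL.eigenvalues finrank_euclideanSpace (f i) :=
    fun i j hij => by
      simp only [neg_div, neg_le_neg_iff]
      exact div_le_div_of_nonneg_left zero_le_two (hpos j) (hL.eigenvalues_antitone _ hij)
  have hortho := (hL.eigenvectorBasis finrank_euclideanSpace).orthonormal.comp f
    (Fin.castLE_injective _)
  exact ⟨hD.le_eigenvalues_of_isInnerDiagonal finrank_euclideanSpace hortho hdiag hanti
      (k := ⟨k, by omega⟩) le_rfl,
    hD.eigenvalues_le_of_isInnerDiagonal finrank_euclideanSpace hortho hdiag hanti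
      (k := ⟨k, by omega⟩) (by dsimp only; omega)⟩

/-- (Merris interlacing) For a tree `T` on `n ≥ 2` vertices with distance
eigenvalues `∂_1 ≥ ⋯ ≥ ∂_n` and Laplacian eigenvalues `λ_1 ≥ ⋯ ≥ λ_{n-1} > λ_n = 0`:
`0 > -2/λ_1 ≥ ∂_2`, and `∂_i ≥ -2/λ_i ≥ ∂_{i+1}` for `2 ≤ i ≤ n-1`. -/
theorem tree_distEig_lapEig_interlace (n : ℕ) (hn : 2 ≤ n) (T : SimpleGraph (Fin n))
    (hT : T.IsTree) :
    0 > -2 / lapEig T 1 ∧ -2 / lapEig T 1 ≥ distEig T 2 ∧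
      ∀ i : ℕ, 2 ≤ i → i ≤ n - 1 →
        distEig T i ≥ -2 / lapEig T i ∧ -2 / lapEig T i ≥ distEig T (i + 1) := by
  classical
  have hcard := Fintype.card_fin n
  have key (k : ℕ) (hk : k + 2 ≤ n) :=
    eigenvalues₀_distMatrix_interlace hT (k := k) (by omega)
  have hpos : 0 < lapEig T 1 := by
    rw [lapEig_succ T (by omega)]
    exact hT.connected.eigenvalues₀_lapMatrix_pos (by simpa using hn)
  refine ⟨div_neg_of_neg_of_pos (by norm_num) hpos, ?_, fun i hi2 hin => ?_⟩
  · rw [lapEig_succ T (by omega), distEig_succ T (by omega)]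
    exact (key 0 hn).2
  · obtain ⟨k, rfl⟩ : ∃ k, i = k + 1 := ⟨i - 1, by omega⟩
    rw [lapEig_succ T (by omega), distEig_succ T (by omega), distEig_succ T (by omega)]
    exact key k (by omega)

end DistPaper
end

section
/- Let G be a simple connected graph on n ≥ 2 vertices with diameter d and remoteness ρ. Then ρ ≤ d - (d² - d)/(2(n-1)). -/
set_option linter.unusedSectionVars false

open Finset

namespace DistPaper

variable {V : Type*} [Fintype V] [DecidableEq V]

lemma dist_getVert_le {V : Type*} {G : SimpleGraph V} (hconn : G.Connected) :
    ∀ {a b : V} (p : G.Walk a b) (k : ℕ), G.dist a (p.getVert k) ≤ k := by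
  intro a b p
  induction p with
  | nil => intro k; simp [SimpleGraph.Walk.getVert, SimpleGraph.dist_self]
  | @cons a c b h q ih =>
    intro k
    cases k with
    | zero => simp
    | succ k =>
      rw [SimpleGraph.Walk.getVert_cons_succ]
      calc G.dist a (q.getVert k) ≤ G.dist a c + G.dist c (q.getVert k) :=
            hconn.dist_triangle
        _ ≤ k + 1 := by
            have h1 : G.dist a c = 1 := by
              rw [SimpleGraph.dist_eq_one_iff_adj]; exact h
            have := ih k
            omega



/-- For a simple connected graph on `n ≥ 2` vertices with diameter `d`
and remoteness `ρ`, we have `ρ ≤ d - (d² - d)/(2(n-1))`. -/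
theorem remoteness_le_diam_sub (n : ℕ) (hn : 2 ≤ n) (G : SimpleGraph (Fin n))
    (hconn : G.Connected) :
    remoteness G ≤ (G.diam : ℝ) - ((G.diam : ℝ) ^ 2 - (G.diam : ℝ)) / (2 * ((n : ℝ) - 1)) := by
  unfold remoteness transmission
  classical
  have hne : Nonempty (Fin n) := ⟨⟨0, by omega⟩⟩
  have hcardn : Fintype.card (Fin n) = n := Fintype.card_fin n
  have hdistlt : ∀ u v : Fin n, G.dist u v < n := by
    intro u v
    obtain ⟨p, hp, hl⟩ := hconn.exists_path_of_dist u v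
    rw [← hl]
    simpa [hcardn] using hp.length_lt
  have hetop : G.ediam ≠ ⊤ := by
    have hle : G.ediam ≤ (n : ℕ∞) := SimpleGraph.ediam_le_of_edist_le fun u v => by
      obtain ⟨p, hp, hl⟩ := hconn.exists_path_of_dist u v
      calc G.edist u v ≤ (p.length : ℕ∞) := SimpleGraph.edist_le p
        _ ≤ (n : ℕ∞) := by exact_mod_cast (le_of_lt (by simpa [hcardn] using hp.length_lt))
    intro htop
    rw [htop, top_le_iff] at hle
    exact absurd hle (by simp)
  have hd_lt : G.diam < n := by
    obtain ⟨u, v, huv⟩ := SimpleGraph.exists_dist_eq_diam (G := G)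
    rw [← huv]; exact hdistlt u v
  -- per-vertex bound
  have key : ∀ v : Fin n, ((∑ u, G.dist v u : ℕ) : ℝ) ≤
      (G.diam : ℝ) * ((n:ℝ) - 1) - ((G.diam : ℝ)^2 - (G.diam : ℝ)) / 2 := by
    intro v
    obtain ⟨u, -, hu⟩ := Finset.exists_mem_eq_sup univ univ_nonempty (G.dist v)
    set e := univ.sup (G.dist v) with he
    have hle_e : ∀ x, G.dist v x ≤ e := fun x => Finset.le_sup (Finset.mem_univ x)
    have hed : e ≤ G.diam := hu ▸ SimpleGraph.dist_le_diam hetop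
    obtain ⟨p, hpIsPath, hpl⟩ := hconn.exists_path_of_dist v u
    rw [← hu] at hpl
    have hgetk : ∀ k ≤ e, G.dist v (p.getVert k) = k := by
      intro k hk
      have h1 : G.dist v (p.getVert k) ≤ k := dist_getVert_le hconn p k
      have hkl : k ≤ p.length := by omega
      have h2 : G.dist u (p.getVert k) ≤ p.length - k := by
        have h3 := dist_getVert_le hconn p.reverse (p.length - k)
        rwa [SimpleGraph.Walk.getVert_reverse, Nat.sub_sub_self hkl] at h3
      have h4 : G.dist v u ≤ G.dist v (p.getVert k) + G.dist (p.getVert k) u :=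
        hconn.dist_triangle
      have h6 : G.dist (p.getVert k) u = G.dist u (p.getVert k) := SimpleGraph.dist_comm
      have h5 : G.dist v u = e := hu.symm
      omega
    set S : Finset (Fin n) := (Finset.range (e+1)).image p.getVert with hS
    have hinj : ∀ a ∈ Finset.range (e+1), ∀ b ∈ Finset.range (e+1),
        p.getVert a = p.getVert b → a = b := by
      intro a ha b hb hab
      rw [Finset.mem_range] at ha hb
      have h1 := hgetk a (by omega)
      have h2 := hgetk b (by omega)
      rw [hab] at h1; omega
    have hcardS : S.card = e + 1 := by
      rw [hS, Finset.card_image_of_injOn (fun a ha b hb => hinj a ha b hb), Finset.card_range]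
    have hScard_le : e + 1 ≤ n := by
      calc e + 1 = S.card := hcardS.symm
        _ ≤ Fintype.card (Fin n) := S.card_le_univ
        _ = n := hcardn
    have hsumS : ∑ x ∈ S, G.dist v x = ∑ k ∈ Finset.range (e+1), k := by
      rw [hS, Finset.sum_image hinj]
      exact Finset.sum_congr rfl fun k hk => hgetk k (by
        rw [Finset.mem_range] at hk; omega)
    have hsumC : ∑ x ∈ Sᶜ, G.dist v x ≤ (n - (e+1)) * e := by
      calc ∑ x ∈ Sᶜ, G.dist v x ≤ ∑ _x ∈ Sᶜ, e := Finset.sum_le_sum fun x _ => hle_e x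
        _ = Sᶜ.card * e := by rw [Finset.sum_const, smul_eq_mul]
        _ = (n - (e+1)) * e := by rw [Finset.card_compl, hcardS, hcardn]
    have htot : ∑ x, G.dist v x ≤ (∑ k ∈ Finset.range (e+1), k) + (n - (e+1)) * e := by
      rw [← Finset.sum_add_sum_compl S (G.dist v)]
      omega
    have hgauss : (∑ k ∈ Finset.range (e+1), k) * 2 = (e+1) * e := Finset.sum_range_id_mul_two (e+1)
    -- now cast
    have hE : (e : ℝ) ≤ (G.diam : ℝ) := by exact_mod_cast hed
    have hD : (G.diam : ℝ) ≤ (n : ℝ) - 1 := by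
      have : G.diam ≤ n - 1 := by omega
      have h2 : ((G.diam : ℕ) : ℝ) ≤ ((n-1 : ℕ) : ℝ) := by exact_mod_cast this
      rwa [Nat.cast_sub (by omega), Nat.cast_one] at h2
    have htotR : ((∑ x, G.dist v x : ℕ) : ℝ) ≤
        ((∑ k ∈ Finset.range (e+1), k : ℕ) : ℝ) + ((n:ℝ) - ((e:ℝ)+1)) * (e:ℝ) := by
      have := htot
      have hc : (((n - (e+1)) : ℕ) : ℝ) = (n:ℝ) - ((e:ℝ)+1) := by
        rw [Nat.cast_sub hScard_le]; push_cast; ring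
      calc ((∑ x, G.dist v x : ℕ) : ℝ) ≤ (((∑ k ∈ Finset.range (e+1), k) + (n - (e+1)) * e : ℕ) : ℝ) := by
            exact_mod_cast this
        _ = _ := by push_cast [Nat.cast_sub hScard_le]; ring
    have hgaussR : ((∑ k ∈ Finset.range (e+1), k : ℕ) : ℝ) * 2 = ((e:ℝ)+1) * (e:ℝ) := by
      exact_mod_cast hgauss
    have hE0 : (0:ℝ) ≤ (e:ℝ) := Nat.cast_nonneg e
    nlinarith [mul_nonneg (sub_nonneg.mpr hE) (sub_nonneg.mpr hD),
      mul_nonneg (sub_nonneg.mpr hE) (by linarith : (0:ℝ) ≤ (n:ℝ) - 1 - (e:ℝ))]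
  -- conclude
  obtain ⟨v, -, hv⟩ := Finset.exists_mem_eq_sup univ univ_nonempty (fun v => ∑ u, G.dist v u)
  rw [hv, hcardn]
  have h2n : (2:ℝ) ≤ (n:ℝ) := by exact_mod_cast hn
  rw [div_le_iff₀ (by linarith : (0:ℝ) < (n:ℝ) - 1)]
  have hexp : ((G.diam : ℝ) - ((G.diam : ℝ)^2 - (G.diam : ℝ)) / (2 * ((n : ℝ) - 1))) * ((n:ℝ) - 1)
      = (G.diam : ℝ) * ((n:ℝ) - 1) - ((G.diam : ℝ)^2 - (G.diam : ℝ)) / 2 := by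
    have hne0 : (n:ℝ) - 1 ≠ 0 := by intro h; linarith
    field_simp
  rw [hexp]
  exact key v



end DistPaper
end

section
/- Let G be a simple connected graph on n ≥ 2 vertices with remoteness ρ and distance eigenvalues ∂_1 ≥ ∂_2 ≥ ... ≥ ∂_n. Then ρ + ∂_n ≤ 0, with equality if and only if G is the complete graph K_n. -/
set_option linter.unusedSectionVars false

open Finset

namespace DistPaper

variable {V : Type*} [Fintype V] [DecidableEq V]

/-! The test vector `e_a - e_b` has Rayleigh quotient `-d(a, b)` for the distance matrix, so taking
`a, b` at distance `diam G` gives `∂_n ≤ -diam G`; every transmission is at most `(n - 1) diam G`,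
so `ρ ≤ diam G`. If `G ≠ K_n` then `diam G ≥ 2`, while every vertex has a neighbour at distance
`1 < diam G`, hence `ρ < diam G`. For `K_n` the matrix `D + I = J` is positive semidefinite, so
`∂_n = -1 = -ρ`. -/

open Matrix

theorem _root_.Tuple.apply_sort_zero_le {m : ℕ} {α : Type*} [LinearOrder α] (f : Fin m → α)
    (h : 0 < m) (j : Fin m) : f (Tuple.sort f ⟨0, h⟩) ≤ f j := by
  have h0 : (⟨0, h⟩ : Fin m) ≤ (Tuple.sort f)⁻¹ j := Nat.zero_le _
  simpa using Tuple.monotone_sort f h0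

theorem _root_.Matrix.IsHermitian.posSemidef_sub_smul_one_iff {n : Type*} [Fintype n]
    [DecidableEq n] {A : Matrix n n ℝ} (hA : A.IsHermitian) (c : ℝ) :
    (A - c • 1).PosSemidef ↔ ∀ i, c ≤ hA.eigenvalues i := by
  rw [posSemidef_iff_isHermitian_and_spectrum_nonneg,
    and_iff_right (hA.sub (isHermitian_one.smul (IsSelfAdjoint.all c))),
    ← Algebra.algebraMap_eq_smul_one, ← spectrum.sub_singleton_eq,
    hA.spectrum_real_eq_range_eigenvalues]
  simp [Set.subset_def]

theorem _root_.Matrix.single_sub_single_dotProduct_mulVec {n R : Type*} [Fintype n]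
    [DecidableEq n] [CommRing R] (M : Matrix n n R) (a b : n) :
    (Pi.single a 1 - Pi.single b 1) ⬝ᵥ (M *ᵥ (Pi.single a 1 - Pi.single b 1)) =
      M a a - M a b - M b a + M b b := by
  simp only [mulVec_sub, mulVec_single_one, dotProduct_sub, sub_dotProduct, single_one_dotProduct,
    col_apply]
  ring

section

variable (G : SimpleGraph V)

theorem distEig_card_eq_iInf [Nonempty V] :
    distEig G (Fintype.card V) = ⨅ i, (isHermitian_distMatrix G).eigenvalues i := by
  have hV := Fintype.card_pos (α := V)
  have hrev : Fin.rev ⟨Fintype.card V - 1, by omega⟩ = (⟨0, hV⟩ : Fin (Fintype.card V)) := by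
    ext; simp only [Fin.val_rev]; omega
  rw [distEig, dif_pos (by omega), hrev]
  refine le_antisymm (le_ciInf fun i => ?_) (ciInf_le (Set.finite_range _).bddBelow _)
  simpa using Tuple.apply_sort_zero_le
    ((isHermitian_distMatrix G).eigenvalues ∘ (Fintype.equivFin V).symm) hV (Fintype.equivFin V i)

theorem distEig_card_le_neg_dist {a b : V} (hab : a ≠ b) :
    distEig G (Fintype.card V) ≤ -G.dist a b := by
  have : Nonempty V := ⟨a⟩
  have hpsd : (distMatrix G - distEig G (Fintype.card V) • 1).PosSemidef :=
    ((isHermitian_distMatrix G).posSemidef_sub_smul_one_iff _).2 fun i => by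
      rw [distEig_card_eq_iInf]
      exact ciInf_le (Set.finite_range _).bddBelow i
  have hform := hpsd.dotProduct_mulVec_nonneg (Pi.single a 1 - Pi.single b 1)
  rw [star_trivial, single_sub_single_dotProduct_mulVec] at hform
  simp only [Matrix.sub_apply, Matrix.smul_apply, one_apply_eq, one_apply_ne hab,
    one_apply_ne hab.symm, distMatrix, SimpleGraph.dist_self, SimpleGraph.dist_comm (u := b),
    smul_eq_mul] at hform
  push_cast at hform
  linarith

theorem distEig_card_le_neg_diam [Nontrivial V] (hconn : G.Connected) :
    distEig G (Fintype.card V) ≤ -G.diam := by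
  obtain ⟨a, b, hab⟩ := G.exists_dist_eq_diam
  have hne : a ≠ b := by
    rintro rfl
    exact SimpleGraph.connected_iff_diam_ne_zero.mp hconn (by simpa using hab.symm)
  simpa [hab] using distEig_card_le_neg_dist G hne

theorem transmission_le_mul {v : V} {d : ℕ} (hd : ∀ u, G.dist v u ≤ d) :
    transmission G v ≤ (Fintype.card V - 1) * d := by
  rw [transmission, ← sum_erase univ (SimpleGraph.dist_self (G := G) (v := v))]
  calc ∑ u ∈ univ.erase v, G.dist v u ≤ ∑ _u ∈ univ.erase v, d := sum_le_sum fun u _ => hd u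
    _ = (Fintype.card V - 1) * d := by simp [card_erase_of_mem]

theorem transmission_lt_mul {u v : V} {d : ℕ} (hd : ∀ w, G.dist v w ≤ d) (huv : u ≠ v)
    (hlt : G.dist v u < d) : transmission G v < (Fintype.card V - 1) * d := by
  rw [transmission, ← sum_erase univ (SimpleGraph.dist_self (G := G) (v := v))]
  calc ∑ w ∈ univ.erase v, G.dist v w < ∑ _w ∈ univ.erase v, d :=
        sum_lt_sum (fun w _ => hd w) ⟨u, mem_erase.2 ⟨huv, mem_univ u⟩, hlt⟩
    _ = (Fintype.card V - 1) * d := by simp [card_erase_of_mem]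

theorem remoteness_le_diam (hconn : G.Connected) : remoteness G ≤ G.diam := by
  have : Nonempty V := hconn.nonempty
  have hsup : univ.sup (transmission G) ≤ (Fintype.card V - 1) * G.diam :=
    Finset.sup_le fun v _ => transmission_le_mul G fun u =>
      G.dist_le_diam (SimpleGraph.connected_iff_ediam_ne_top.mp hconn)
  have hV : 1 ≤ Fintype.card V := Fintype.card_pos
  rw [remoteness]
  refine div_le_of_le_mul₀ (by simpa using hV) (Nat.cast_nonneg _) ?_
  have hsup' := (Nat.cast_le (α := ℝ)).2 hsup
  push_cast [Nat.cast_sub hV] at hsup'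
  linarith

theorem remoteness_lt_diam (hconn : G.Connected) (htop : G ≠ ⊤) : remoteness G < G.diam := by
  obtain ⟨a, b, hab, -⟩ := SimpleGraph.ne_top_iff_exists_not_adj.mp htop
  have : Nontrivial V := ⟨a, b, hab⟩
  have hdiam : 1 < G.diam := by
    have h0 := SimpleGraph.connected_iff_diam_ne_zero.mp hconn
    have h1 := mt SimpleGraph.diam_eq_one.mp htop
    omega
  have hV : 1 < Fintype.card V := Fintype.one_lt_card
  have hsup : univ.sup (transmission G) < (Fintype.card V - 1) * G.diam := by
    rw [Finset.sup_lt_iff (Nat.mul_pos (by omega) (by omega))]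
    intro v _
    obtain ⟨u, hvu⟩ := hconn.preconnected.exists_adj_of_nontrivial v
    refine transmission_lt_mul G (fun w => G.dist_le_diam ?_) hvu.ne' ?_
    · exact SimpleGraph.connected_iff_ediam_ne_top.mp hconn
    · rwa [SimpleGraph.dist_eq_one_iff_adj.mpr hvu]
  rw [remoteness, div_lt_iff₀ (by simpa using hV)]
  have hsup' := (Nat.cast_lt (α := ℝ)).2 hsup
  push_cast [Nat.cast_sub hV.le] at hsup'
  linarith

theorem transmission_top (v : V) : transmission ⊤ v = Fintype.card V - 1 := by
  rw [transmission, ← sum_erase univ SimpleGraph.dist_self,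
    sum_congr rfl fun u hu => SimpleGraph.dist_top_of_ne (ne_of_mem_erase hu).symm]
  simp [card_erase_of_mem]

theorem remoteness_top [Nontrivial V] : remoteness (⊤ : SimpleGraph V) = 1 := by
  have hV : 1 < Fintype.card V := Fintype.one_lt_card
  rw [remoteness, funext transmission_top, sup_const univ_nonempty, Nat.cast_sub hV.le,
    Nat.cast_one]
  exact div_self (sub_pos.2 (by exact_mod_cast hV)).ne'

theorem distMatrix_top : distMatrix (⊤ : SimpleGraph V) = of (fun _ _ => 1) - 1 := by
  ext u v
  by_cases h : u = v <;> simp [distMatrix, SimpleGraph.dist_top, one_apply, h]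

theorem distEig_top [Nontrivial V] : distEig (⊤ : SimpleGraph V) (Fintype.card V) = -1 := by
  have hpsd : (distMatrix (⊤ : SimpleGraph V) - (-1 : ℝ) • 1).PosSemidef := by
    rw [distMatrix_top, neg_smul, one_smul, sub_neg_eq_add, sub_add_cancel]
    simpa [vecMulVec] using posSemidef_vecMulVec_star_self (1 : V → ℝ)
  refine le_antisymm ?_ ?_
  · simpa using distEig_card_le_neg_diam (⊤ : SimpleGraph V) SimpleGraph.connected_top
  · rw [distEig_card_eq_iInf]
    exact le_ciInf (((isHermitian_distMatrix _).posSemidef_sub_smul_one_iff (-1)).1 hpsd)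

end

/-- For a simple connected graph on `n ≥ 2` vertices with remoteness `ρ`
and smallest distance eigenvalue `∂_n`, `ρ + ∂_n ≤ 0`, with equality iff `G = K_n`. -/
theorem remoteness_add_smallest_distEig_nonpos (n : ℕ) (hn : 2 ≤ n) (G : SimpleGraph (Fin n))
    (hconn : G.Connected) :
    remoteness G + distEig G n ≤ 0 ∧ (remoteness G + distEig G n = 0 ↔ G = ⊤) := by
  have : Nontrivial (Fin n) := Fin.nontrivial_iff_two_le.mpr hn
  have hρ := remoteness_le_diam G hconn
  have hμ : distEig G n ≤ -G.diam := by
    simpa using distEig_card_le_neg_diam G hconn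
  refine ⟨by linarith, fun heq => ?_, ?_⟩
  · by_contra htop
    linarith [remoteness_lt_diam G hconn htop]
  · rintro rfl
    have hμtop : distEig (⊤ : SimpleGraph (Fin n)) n = -1 := by
      simpa using distEig_top (V := Fin n)
    rw [remoteness_top, hμtop]
    norm_num

end DistPaper
end

section
/- Let G be a simple connected graph on n vertices with diameter d ≥ 3 and distance spectral radius ∂_1. Then ∂_1 > n - 2 + d. -/
set_option linter.unusedSectionVars false

open Finset

namespace DistPaper

variable {V : Type*} [Fintype V] [DecidableEq V]

/-! Take a diametral pair `u, w` and the test vector `x` with `x u = x w = d / 2` and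
`x a = 1` elsewhere. Since `d(u, a) + d(a, w) ≥ d` and `d(a, b) ≥ 1` for `a ≠ b`, we get
`xᵀ D x - (n - 2 + d) xᵀ x ≥ (n - 2) (d² / 2 - d - 1) > 0` once `d ≥ 3`, and the Rayleigh
quotient bounds `∂₁` from below. -/

open Matrix

lemma _root_.Matrix.IsHermitian.dotProduct_mulVec_le {n : Type*} [Fintype n] [DecidableEq n]
    {A : Matrix n n ℝ} (hA : A.IsHermitian) {μ : ℝ} (hμ : ∀ i, hA.eigenvalues i ≤ μ)
    (x : n → ℝ) : x ⬝ᵥ A *ᵥ x ≤ μ * (x ⬝ᵥ x) := by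
  have hpsd : (algebraMap ℝ (Matrix n n ℝ) μ - A).PosSemidef := by
    refine posSemidef_iff_isHermitian_and_spectrum_nonneg.mpr ⟨?_, ?_⟩
    · exact (isHermitian_diagonal_of_self_adjoint _ (by ext; simp)).sub hA
    · rw [← spectrum.singleton_sub_eq, hA.spectrum_real_eq_range_eigenvalues]
      rintro _ ⟨_, rfl, _, ⟨i, rfl⟩, rfl⟩
      simpa using hμ i
  have hquad := hpsd.dotProduct_mulVec_nonneg x
  rw [Algebra.algebraMap_eq_smul_one, sub_mulVec, smul_mulVec, one_mulVec, dotProduct_sub,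
    dotProduct_smul, star_trivial, smul_eq_mul] at hquad
  linarith

lemma eigenvalues_le_distEig_one (G : SimpleGraph V) (i : V) :
    (isHermitian_distMatrix G).eigenvalues i ≤ distEig G 1 := by
  have h : 1 - 1 < Fintype.card V := Fintype.card_pos_iff.mpr ⟨i⟩
  set f := (isHermitian_distMatrix G).eigenvalues ∘ (Fintype.equivFin V).symm
  set j := (Tuple.sort f).symm (Fintype.equivFin V i)
  have hfi : (isHermitian_distMatrix G).eigenvalues i = f (Tuple.sort f j) := by simp [f, j]
  rw [distEig, dif_pos h, hfi]
  refine Tuple.monotone_sort f (Fin.le_def.mpr ?_)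
  simp only [Fin.val_rev]
  omega

lemma lt_distEig_one_of_lt_dotProduct_mulVec (G : SimpleGraph V) {r : ℝ} (x : V → ℝ)
    (h : r * (x ⬝ᵥ x) < x ⬝ᵥ distMatrix G *ᵥ x) : r < distEig G 1 := by
  have hray := (isHermitian_distMatrix G).dotProduct_mulVec_le
    (eigenvalues_le_distEig_one G) x
  exact lt_of_mul_lt_mul_right (h.trans_le hray) (dotProduct_self_star_nonneg x)

lemma _root_.Finset.sum_eq_add_add_sum_compl_pair {α M : Type*} [Fintype α] [DecidableEq α]
    [AddCommMonoid M] {u w : α} (huw : u ≠ w) (f : α → M) :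
    ∑ a, f a = f u + f w + ∑ a ∈ ({u, w} : Finset α)ᶜ, f a := by
  rw [← sum_add_sum_compl {u, w}, sum_pair huw]

section Metric

variable {α : Type*} {G : SimpleGraph α}

lemma _root_.SimpleGraph.dist_lt_card [Fintype α] (u v : α) : G.dist u v < Fintype.card α := by
  by_cases h : G.Reachable u v
  · obtain ⟨p, hp, hlen⟩ := h.exists_path_of_dist
    exact hlen ▸ hp.length_lt
  · rw [SimpleGraph.dist_eq_zero_of_not_reachable h]
    exact Fintype.card_pos_iff.mpr ⟨u⟩

lemma _root_.SimpleGraph.Connected.card_mul_le_sum_dist_add_dist (hG : G.Connected) (u w : α)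
    (s : Finset α) :
    (#s * G.dist u w : ℝ) ≤ ∑ a ∈ s, (G.dist u a + G.dist w a : ℝ) := by
  rw [← nsmul_eq_mul, ← sum_const]
  refine sum_le_sum fun a _ ↦ ?_
  rw [SimpleGraph.dist_comm (u := w)]
  exact_mod_cast hG.dist_triangle

lemma _root_.SimpleGraph.Connected.card_mul_card_sub_one_le_sum_sum_dist [DecidableEq α]
    (hG : G.Connected) (s : Finset α) :
    (#s * (#s - 1) : ℝ) ≤ ∑ a ∈ s, ∑ b ∈ s, (G.dist a b : ℝ) := by
  have hone : ∀ a b, 1 - (if a = b then 1 else 0 : ℝ) ≤ G.dist a b := by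
    intro a b
    split_ifs with hab
    · simp
    · rw [sub_zero]
      exact_mod_cast hG.pos_dist_of_ne hab
  calc (#s * (#s - 1) : ℝ) = ∑ a ∈ s, ∑ b ∈ s, (1 - if a = b then 1 else 0 : ℝ) := by
        simp only [sum_sub_distrib, sum_const, nsmul_eq_mul, mul_one, sum_ite_eq, sum_ite_mem,
          inter_self]
        ring
    _ ≤ _ := sum_le_sum fun a _ ↦ sum_le_sum fun b _ ↦ hone a b

end Metric

def pairWeight (u w : V) (c : ℝ) (a : V) : ℝ :=
  if a = u ∨ a = w then c else 1

section pairWeight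

variable {u w : V} {c : ℝ}

@[simp] lemma pairWeight_left : pairWeight u w c u = c := by simp [pairWeight]

@[simp] lemma pairWeight_right : pairWeight u w c w = c := by simp [pairWeight]

lemma pairWeight_of_mem_compl {a : V} (ha : a ∈ ({u, w} : Finset V)ᶜ) :
    pairWeight u w c a = 1 := by
  simp_all [pairWeight]

lemma dotProduct_pairWeight_self (huw : u ≠ w) :
    pairWeight u w c ⬝ᵥ pairWeight u w c = 2 * c ^ 2 + #({u, w} : Finset V)ᶜ := by
  rw [dotProduct, sum_eq_add_add_sum_compl_pair huw, pairWeight_left, pairWeight_right,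
    sum_congr rfl fun a ha ↦ by rw [pairWeight_of_mem_compl ha, one_mul]]
  simp only [sum_const, nsmul_eq_mul, mul_one]
  ring

lemma distMatrix_mulVec_pairWeight (G : SimpleGraph V) (huw : u ≠ w) (a : V) :
    (distMatrix G *ᵥ pairWeight u w c) a =
      c * (G.dist a u + G.dist a w) + ∑ b ∈ ({u, w} : Finset V)ᶜ, (G.dist a b : ℝ) := by
  simp only [mulVec, dotProduct, distMatrix]
  rw [sum_eq_add_add_sum_compl_pair huw, pairWeight_left, pairWeight_right,
    sum_congr rfl fun b hb ↦ by rw [pairWeight_of_mem_compl hb, mul_one]]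
  ring

lemma dotProduct_pairWeight_distMatrix_mulVec (G : SimpleGraph V) (huw : u ≠ w) :
    pairWeight u w c ⬝ᵥ distMatrix G *ᵥ pairWeight u w c =
      2 * c ^ 2 * G.dist u w
      + 2 * c * ∑ a ∈ ({u, w} : Finset V)ᶜ, (G.dist u a + G.dist w a : ℝ)
      + ∑ a ∈ ({u, w} : Finset V)ᶜ, ∑ b ∈ ({u, w} : Finset V)ᶜ, (G.dist a b : ℝ) := by
  rw [dotProduct, sum_eq_add_add_sum_compl_pair huw, pairWeight_left, pairWeight_right,
    sum_congr rfl fun a ha ↦ by rw [pairWeight_of_mem_compl ha, one_mul]]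
  simp only [distMatrix_mulVec_pairWeight G huw, sum_add_distrib, SimpleGraph.dist_self,
    Nat.cast_zero]
  have hsymm : ∑ a ∈ ({u, w} : Finset V)ᶜ, c * (G.dist a u + G.dist a w : ℝ) =
      c * ∑ a ∈ ({u, w} : Finset V)ᶜ, (G.dist u a + G.dist w a : ℝ) := by
    simp only [mul_sum, G.dist_comm (v := u), G.dist_comm (v := w)]
  rw [hsymm, G.dist_comm (u := w), sum_add_distrib]
  ring

end pairWeight

theorem distSpectralRadius_gt_general (n : ℕ) (G : SimpleGraph (Fin n))
    (hd : 3 ≤ G.diam) :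
    (n : ℝ) - 2 + (G.diam : ℝ) < distEig G 1 := by
  have hG : G.Connected := by
    by_contra h
    rw [SimpleGraph.diam_eq_zero_of_not_connected h] at hd
    omega
  have : Nonempty (Fin n) := hG.nonempty
  obtain ⟨u, w, huw⟩ := G.exists_dist_eq_diam
  have hne : u ≠ w := by
    rintro rfl
    rw [SimpleGraph.dist_self] at huw
    omega
  have hn : G.diam < n := by simpa [huw] using G.dist_lt_card u w
  set s := ({u, w} : Finset (Fin n))ᶜ
  have hs : (#s : ℝ) = n - 2 := by
    rw [card_compl, card_pair hne, Fintype.card_fin, Nat.cast_sub (by omega)]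
    norm_num
  refine lt_distEig_one_of_lt_dotProduct_mulVec G (pairWeight u w (G.diam / 2)) ?_
  rw [dotProduct_pairWeight_self hne, dotProduct_pairWeight_distMatrix_mulVec G hne, huw, hs]
  have hcross := hG.card_mul_le_sum_dist_add_dist u w s
  have hinner := hG.card_mul_card_sub_one_le_sum_sum_dist s
  rw [huw, hs] at hcross
  rw [hs] at hinner
  have hd' : (3 : ℝ) ≤ G.diam := by exact_mod_cast hd
  have hn' : (G.diam : ℝ) + 1 ≤ n := by exact_mod_cast hn
  have hgap : 0 < ((n : ℝ) - 2) * ((G.diam : ℝ) ^ 2 / 2 - G.diam - 1) := by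
    apply mul_pos <;> nlinarith
  nlinarith [mul_le_mul_of_nonneg_left hcross (by positivity : (0 : ℝ) ≤ G.diam)]

/-- For a simple connected graph on `n` vertices with diameter `d ≥ 3`,
the distance spectral radius satisfies `∂_1 > n - 2 + d`. -/
theorem distSpectralRadius_gt (n : ℕ) (G : SimpleGraph (Fin n))
    (hconn : G.Connected) (hd : 3 ≤ G.diam) :
    (n : ℝ) - 2 + (G.diam : ℝ) < distEig G 1 :=
  distSpectralRadius_gt_general n G hd

end DistPaper
end

section
/- For every real number x ≥ 11, we have 1 - 1/x > sin²(7xπ/(16(x+1))). -/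
set_option linter.unusedSectionVars false

open Finset

namespace DistPaper

variable {V : Type*} [Fintype V] [DecidableEq V]

/-!
The angle is `π/2 - ψ` with `ψ = π/16 · (x+8)/(x+1) ∈ (0, 1/3]`, so the claim is `1/x < sin² ψ`.
Since `sin ψ > ψ - ψ³/6 ≥ (53/54) ψ` and `π > 3.14`, it reduces to a polynomial inequality in `x`,
which is tight near `x = 11`.
-/

section SinBounds

open Real

lemma one_sub_sq_div_six_mul_lt_sin {y a : ℝ} (hy : 0 < y) (hya : y ≤ a) :
    (1 - a ^ 2 / 6) * y < sin y := by
  have hsq : y ^ 2 ≤ a ^ 2 := pow_le_pow_left₀ hy.le hya 2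
  have hcube : y ^ 3 ≤ a ^ 2 * y := by
    rw [pow_succ]
    exact mul_le_mul_of_nonneg_right hsq hy.le
  linarith [sin_gt_sub_cube hy]

lemma seven_mul_pi_div_eq_pi_div_two_sub {x : ℝ} (hx : x + 1 ≠ 0) :
    7 * x * π / (16 * (x + 1)) = π / 2 - π / 16 * ((x + 8) / (x + 1)) := by
  field_simp
  ring

lemma inv_lt_sq_of_eleven_le {x : ℝ} (hx : 11 ≤ x) :
    1 / x < (53 / 54 * (157 / 800 * ((x + 8) / (x + 1)))) ^ 2 := by
  have hy : 0 ≤ x - 11 := by linarith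
  rw [mul_div_assoc', mul_div_assoc', div_pow, div_lt_div_iff₀ (by linarith) (by positivity)]
  nlinarith [pow_nonneg hy 2, pow_nonneg hy 3]

end SinBounds

/-- For every real `x ≥ 11`, `1 - 1/x > sin²(7xπ/(16(x+1)))`. -/
theorem one_sub_inv_gt_sin_sq (x : ℝ) (hx : 11 ≤ x) :
    1 - 1 / x > Real.sin (7 * x * Real.pi / (16 * (x + 1))) ^ 2 := by
  have hx1 : 0 < x + 1 := by linarith
  rw [seven_mul_pi_div_eq_pi_div_two_sub hx1.ne', Real.sin_pi_div_two_sub, Real.cos_sq',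
    gt_iff_lt, sub_lt_sub_iff_left]
  set ψ := Real.pi / 16 * ((x + 8) / (x + 1))
  have hratio_pos : 0 < (x + 8) / (x + 1) := by positivity
  have hratio_le : (x + 8) / (x + 1) ≤ 19 / 12 := by
    rw [div_le_div_iff₀ hx1 (by norm_num)]
    linarith
  have hψ_lower : 157 / 800 * ((x + 8) / (x + 1)) ≤ ψ := by
    have hπ := Real.pi_gt_d2
    exact mul_le_mul_of_nonneg_right (by linarith) hratio_pos.le
  have hψ_upper : ψ ≤ 1 / 3 := by
    have hπ := Real.pi_lt_d2
    calc ψ ≤ 3.15 / 16 * (19 / 12) := by unfold ψ; gcongr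
      _ ≤ 1 / 3 := by norm_num
  have hsin : 53 / 54 * ψ < Real.sin ψ := by
    calc 53 / 54 * ψ = (1 - (1 / 3) ^ 2 / 6) * ψ := by norm_num
      _ < Real.sin ψ := one_sub_sq_div_six_mul_lt_sin (by positivity) hψ_upper
  calc 1 / x < (53 / 54 * (157 / 800 * ((x + 8) / (x + 1)))) ^ 2 := inv_lt_sq_of_eleven_le hx
    _ ≤ (53 / 54 * ψ) ^ 2 := by gcongr
    _ < Real.sin ψ ^ 2 := by gcongr

end DistPaper
end
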